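/- arXiv:2404.16408 — 5 statements merged into one kernel-verified Lean document; each statement's English description precedes it below -/
import Mathlib

section
/- Let L ≥ 1 be an integer, Z > 0 a real number, and Δ = 2Z/(2^L − 1). Let b₁,…,b_L ∈ {0,1} be fixed bits and let X₁,…,X_L be independent Bernoulli random variables with P(X_ν = 1) = ϱ for some ϱ ∈ [0,1]. Define the received bits B_ν = X_ν(1−b_ν) + (1−X_ν)b_ν, the encoded value Q = −Z + Σ_{ν=1}^{L} b_ν 2^{ν−1} Δ, and the decoded value Q° = −Z + Σ_{ν=1}^{L} B_ν 2^{ν−1} Δ. Then E[Q°] = (1 − 2ϱ) Q. -/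
open MeasureTheory ProbabilityTheory

/-! An affine decoder commutes with expectation, so `E[Q°]` is the decoding of the bit means
`E[B ν] = ϱ (1 - b ν) + (1 - ϱ) b ν = ϱ + (1 - 2ϱ) b ν`. Decoding the constant word `ϱ`
gives `-Z + 2ϱZ`, because `Δ` is chosen so that the all-ones word decodes to `Z`; what
remains is `(1 - 2ϱ)` times the decoding of `b`. -/

def binaryDecode (Z Δ : ℝ) {L : ℕ} (c : Fin L → ℝ) : ℝ :=
  -Z + ∑ ν : Fin L, c ν * 2 ^ (ν : ℕ) * Δ

lemma eq_indicator_of_forall_eq_zero_or_one {Ω : Type*} {X : Ω → ℝ}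
    (hX : ∀ ω, X ω = 0 ∨ X ω = 1) : X = {ω | X ω = 1}.indicator 1 := by
  funext ω
  rcases hX ω with h | h <;> simp [h]

section BinaryRandomVariable

variable {Ω : Type*} [MeasurableSpace Ω] {μ : Measure Ω} {X : Ω → ℝ}

lemma integrable_and_integral_of_forall_eq_zero_or_one [IsFiniteMeasure μ]
    (hXm : Measurable X) (hX : ∀ ω, X ω = 0 ∨ X ω = 1) :
    Integrable X μ ∧ ∫ ω, X ω ∂μ = μ.real {ω | X ω = 1} := by
  set A := {ω | X ω = 1}
  have hA : MeasurableSet A := hXm (measurableSet_singleton 1)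
  rw [eq_indicator_of_forall_eq_zero_or_one hX]
  exact ⟨(integrable_const 1).indicator hA, integral_indicator_one hA⟩

variable [IsProbabilityMeasure μ]

lemma integral_flip (hX : Integrable X μ) (b : ℝ) :
    ∫ ω, (X ω * (1 - b) + (1 - X ω) * b) ∂μ
      = (∫ ω, X ω ∂μ) * (1 - b) + (1 - ∫ ω, X ω ∂μ) * b := by
  have hflip : ∀ ω, X ω * (1 - b) + (1 - X ω) * b = b + X ω * (1 - 2 * b) := fun ω => by ring
  simp_rw [hflip]
  rw [integral_add (integrable_const b) (hX.mul_const _), integral_mul_const, integral_const,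
    probReal_univ, one_smul]
  ring

lemma integral_binaryDecode {L : ℕ} (Z Δ : ℝ) {Y : Fin L → Ω → ℝ}
    (hY : ∀ ν, Integrable (Y ν) μ) :
    ∫ ω, binaryDecode Z Δ (fun ν => Y ν ω) ∂μ
      = binaryDecode Z Δ (fun ν => ∫ ω, Y ν ω ∂μ) := by
  have hterm : ∀ ν ∈ Finset.univ, Integrable (fun ω => Y ν ω * 2 ^ (ν : ℕ) * Δ) μ :=
    fun ν _ => ((hY ν).mul_const _).mul_const _
  unfold binaryDecode
  rw [integral_add (integrable_const _) (integrable_finsetSum _ hterm), integral_finsetSum _ hterm,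
    integral_const, probReal_univ, one_smul]
  simp only [integral_mul_const]

end BinaryRandomVariable

lemma sum_two_pow_mul_div_two_pow_sub_one {L : ℕ} (hL : 1 ≤ L) (Z : ℝ) :
    ∑ ν : Fin L, (2 : ℝ) ^ (ν : ℕ) * (2 * Z / (2 ^ L - 1)) = 2 * Z := by
  have hne : (2 : ℝ) ^ L - 1 ≠ 0 := (sub_pos.2 (one_lt_pow₀ one_lt_two (by omega))).ne'
  rw [← Finset.sum_mul, Fin.sum_univ_eq_sum_range (fun i => (2 : ℝ) ^ i),
    geom_sum_eq (by norm_num : (2 : ℝ) ≠ 1)]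
  field_simp
  ring

lemma binaryDecode_flip {L : ℕ} {Z Δ : ℝ}
    (hΔ : ∑ ν : Fin L, (2 : ℝ) ^ (ν : ℕ) * Δ = 2 * Z) (ϱ : ℝ) (b : Fin L → ℝ) :
    binaryDecode Z Δ (fun ν => ϱ * (1 - b ν) + (1 - ϱ) * b ν)
      = (1 - 2 * ϱ) * binaryDecode Z Δ b := by
  have hsplit : ∑ ν : Fin L, (ϱ * (1 - b ν) + (1 - ϱ) * b ν) * 2 ^ (ν : ℕ) * Δ
      = ϱ * ∑ ν : Fin L, (2 : ℝ) ^ (ν : ℕ) * Δ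
        + (1 - 2 * ϱ) * ∑ ν : Fin L, b ν * 2 ^ (ν : ℕ) * Δ := by
    rw [Finset.mul_sum, Finset.mul_sum, ← Finset.sum_add_distrib]
    exact Finset.sum_congr rfl fun ν _ => by ring
  unfold binaryDecode
  rw [hsplit, hΔ]
  ring

theorem decoded_output_mean_general
    {Ω : Type*} [MeasurableSpace Ω] (μ : Measure Ω) [IsProbabilityMeasure μ]
    (L : ℕ) (hL : 1 ≤ L) (Z : ℝ)
    (Δ : ℝ) (hΔ : Δ = 2 * Z / (2 ^ L - 1))
    (b : Fin L → ℝ)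
    (ϱ : ℝ) (hϱ0 : 0 ≤ ϱ)
    (X : Fin L → Ω → ℝ) (hXm : ∀ ν, Measurable (X ν))
    (hXval : ∀ ν ω, X ν ω = 0 ∨ X ν ω = 1)
    (hX1 : ∀ ν, μ {ω | X ν ω = 1} = ENNReal.ofReal ϱ)
    (B : Fin L → Ω → ℝ)
    (hB : ∀ ν ω, B ν ω = X ν ω * (1 - b ν) + (1 - X ν ω) * b ν)
    (Q : ℝ) (hQ : Q = -Z + ∑ ν : Fin L, b ν * 2 ^ (ν : ℕ) * Δ) :
    ∫ ω, (-Z + ∑ ν : Fin L, B ν ω * 2 ^ (ν : ℕ) * Δ) ∂μ = (1 - 2 * ϱ) * Q := by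
  have hX ν : Integrable (X ν) μ ∧ ∫ ω, X ν ω ∂μ = ϱ := by
    obtain ⟨hint, hmean⟩ :=
      integrable_and_integral_of_forall_eq_zero_or_one (μ := μ) (hXm ν) (hXval ν)
    exact ⟨hint, by rw [hmean, measureReal_def, hX1, ENNReal.toReal_ofReal hϱ0]⟩
  have hBint ν : Integrable (B ν) μ := by
    rw [funext (hB ν)]
    exact ((hX ν).1.mul_const _).add (((integrable_const (1 : ℝ)).sub (hX ν).1).mul_const _)
  calc ∫ ω, (-Z + ∑ ν : Fin L, B ν ω * 2 ^ (ν : ℕ) * Δ) ∂μ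
      = binaryDecode Z Δ (fun ν => ∫ ω, B ν ω ∂μ) := integral_binaryDecode Z Δ hBint
    _ = binaryDecode Z Δ (fun ν => ϱ * (1 - b ν) + (1 - ϱ) * b ν) := by
      simp_rw [hB, integral_flip (hX _).1, (hX _).2]
    _ = (1 - 2 * ϱ) * Q := by
      rw [binaryDecode_flip (hΔ ▸ sum_two_pow_mul_div_two_pow_sub_one hL Z), hQ]
      rfl

/-- Mean of the decoded output of a binary encoding-decoding scheme over a memoryless
binary symmetric channel: if the bits `b ν ∈ {0,1}` of the encoded value
`Q = -Z + Σ_ν b ν 2^ν Δ` are independently flipped with crossover probability `ϱ`,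
yielding received bits `B ν = X ν (1 - b ν) + (1 - X ν) b ν` and decoded value
`Q° = -Z + Σ_ν B ν 2^ν Δ`, then `E[Q°] = (1 - 2 ϱ) Q`. -/
theorem decoded_output_mean
    {Ω : Type*} [MeasurableSpace Ω] (μ : Measure Ω) [IsProbabilityMeasure μ]
    (L : ℕ) (hL : 1 ≤ L) (Z : ℝ) (hZ : 0 < Z)
    (Δ : ℝ) (hΔ : Δ = 2 * Z / (2 ^ L - 1))
    (b : Fin L → ℝ) (hb : ∀ ν, b ν = 0 ∨ b ν = 1)
    (ϱ : ℝ) (hϱ0 : 0 ≤ ϱ) (hϱ1 : ϱ ≤ 1)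
    (X : Fin L → Ω → ℝ) (hXm : ∀ ν, Measurable (X ν))
    (hXval : ∀ ν ω, X ν ω = 0 ∨ X ν ω = 1)
    (hX1 : ∀ ν, μ {ω | X ν ω = 1} = ENNReal.ofReal ϱ)
    (hXindep : iIndepFun X μ)
    (B : Fin L → Ω → ℝ)
    (hB : ∀ ν ω, B ν ω = X ν ω * (1 - b ν) + (1 - X ν ω) * b ν)
    (Q : ℝ) (hQ : Q = -Z + ∑ ν : Fin L, b ν * 2 ^ (ν : ℕ) * Δ) :
    ∫ ω, (-Z + ∑ ν : Fin L, B ν ω * 2 ^ (ν : ℕ) * Δ) ∂μ = (1 - 2 * ϱ) * Q :=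
  decoded_output_mean_general μ L hL Z Δ hΔ b ϱ hϱ0 X hXm hXval hX1 B hB Q hQ
end

section
/- Let L ≥ 1 be an integer, Z > 0 a real number, and Δ = 2Z/(2^L − 1). Let b₁,…,b_L ∈ {0,1} be fixed bits and let X₁,…,X_L be independent Bernoulli random variables with P(X_ν = 1) = ϱ for some ϱ ∈ [0,1]. Define the received bits B_ν = X_ν(1−b_ν) + (1−X_ν)b_ν and the decoded value Q° = −Z + Σ_{ν=1}^{L} B_ν 2^{ν−1} Δ. Then Var(Q°) = ϱ(1−ϱ) · 4Z²(2^{2L} − 1) / (3(2^L − 1)²). -/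
open MeasureTheory ProbabilityTheory

/-!
Each received bit is affine in the channel noise, `B ν = b ν + (1 - 2 b ν) X ν`, and
`(1 - 2 b ν)² = 1` for a bit `b ν`. So up to an additive constant the decoded value is
`∑ ν, ± 2^ν Δ X ν`, a sum of independent scaled Bernoulli variables, whose variance is
`ϱ (1 - ϱ) Δ² ∑ ν < L, 4^ν = ϱ (1 - ϱ) Δ² (4^L - 1) / 3`.
-/

section

variable {Ω : Type*} [MeasurableSpace Ω] {μ : Measure Ω}

lemma memLp_of_forall_eq_zero_or_eq_one [IsFiniteMeasure μ] {X : Ω → ℝ} (hXm : Measurable X)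
    (hX : ∀ ω, X ω = 0 ∨ X ω = 1) : MemLp X 2 μ :=
  memLp_of_bounded (a := 0) (b := 1)
    (Filter.Eventually.of_forall fun ω => by rcases hX ω with h | h <;> simp [h])
    hXm.aestronglyMeasurable 2

lemma variance_of_forall_eq_zero_or_eq_one [IsProbabilityMeasure μ] {X : Ω → ℝ}
    (hXm : Measurable X) (hX : ∀ ω, X ω = 0 ∨ X ω = 1) :
    variance X μ = μ.real {ω | X ω = 1} * (1 - μ.real {ω | X ω = 1}) := by
  have hsq : X ^ 2 = X := by
    funext ω
    rcases hX ω with h | h <;> simp [h]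
  have hindicator : X = {ω | X ω = 1}.indicator 1 := by
    funext ω
    rcases hX ω with h | h <;> simp [h]
  have hmean : μ[X] = μ.real {ω | X ω = 1} := by
    conv_lhs => rw [hindicator]
    exact integral_indicator_one (hXm (measurableSet_singleton 1))
  rw [variance_eq_sub (memLp_of_forall_eq_zero_or_eq_one hXm hX), hsq, hmean]
  ring

lemma variance_const_add_sum_mul [IsProbabilityMeasure μ] {ι : Type*} [Fintype ι]
    {X : ι → Ω → ℝ} (hX : ∀ i, MemLp (X i) 2 μ) (hindep : iIndepFun X μ) (c : ℝ) (a : ι → ℝ) :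
    variance (fun ω => c + ∑ i, a i * X i ω) μ = ∑ i, a i ^ 2 * variance (X i) μ := by
  have hscaled : iIndepFun (fun i ω => a i * X i ω) μ :=
    hindep.comp (fun i x => a i * x) fun i => measurable_const_mul (a i)
  have hscaledMemLp : ∀ i, MemLp (fun ω => a i * X i ω) 2 μ := fun i => (hX i).const_mul (a i)
  have hsum : (fun ω => ∑ i, a i * X i ω) = ∑ i, fun ω => a i * X i ω := by
    funext ω
    simp only [Finset.sum_apply]
  rw [variance_const_add (memLp_finsetSum _ fun i _ => hscaledMemLp i).aestronglyMeasurable, hsum,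
    IndepFun.variance_sum (fun i _ => hscaledMemLp i) fun i _ j _ hij => hscaled.indepFun hij]
  simp only [variance_const_mul]

end

lemma sum_fin_two_pow_sq (L : ℕ) :
    ∑ ν : Fin L, ((2 : ℝ) ^ (ν : ℕ)) ^ 2 = (2 ^ (2 * L) - 1) / 3 := by
  simp_rw [← pow_mul, mul_comm _ 2, pow_mul]
  rw [Fin.sum_univ_eq_sum_range (fun ν => ((2 : ℝ) ^ 2) ^ ν), geom_sum_eq (by norm_num)]
  norm_num

theorem decoded_output_variance_general
    {Ω : Type*} [MeasurableSpace Ω] (μ : Measure Ω) [IsProbabilityMeasure μ]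
    (L : ℕ) (Z : ℝ)
    (Δ : ℝ) (hΔ : Δ = 2 * Z / (2 ^ L - 1))
    (b : Fin L → ℝ) (hb : ∀ ν, b ν = 0 ∨ b ν = 1)
    (ϱ : ℝ) (hϱ0 : 0 ≤ ϱ)
    (X : Fin L → Ω → ℝ) (hXm : ∀ ν, Measurable (X ν))
    (hXval : ∀ ν ω, X ν ω = 0 ∨ X ν ω = 1)
    (hX1 : ∀ ν, μ {ω | X ν ω = 1} = ENNReal.ofReal ϱ)
    (hXindep : iIndepFun X μ)
    (B : Fin L → Ω → ℝ)
    (hB : ∀ ν ω, B ν ω = X ν ω * (1 - b ν) + (1 - X ν ω) * b ν) :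
    variance (fun ω => -Z + ∑ ν : Fin L, B ν ω * 2 ^ (ν : ℕ) * Δ) μ
      = ϱ * (1 - ϱ) * (4 * Z ^ 2 * (2 ^ (2 * L) - 1)) / (3 * (2 ^ L - 1) ^ 2) := by
  have hdecoded : (fun ω => -Z + ∑ ν : Fin L, B ν ω * 2 ^ (ν : ℕ) * Δ) = fun ω =>
      (-Z + ∑ ν, b ν * 2 ^ (ν : ℕ) * Δ) + ∑ ν, (1 - 2 * b ν) * 2 ^ (ν : ℕ) * Δ * X ν ω := by
    funext ω
    rw [add_assoc, ← Finset.sum_add_distrib]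
    congr 1
    refine Finset.sum_congr rfl fun ν _ => ?_
    rw [hB]
    ring
  have hXvar : ∀ ν, variance (X ν) μ = ϱ * (1 - ϱ) := fun ν => by
    rw [variance_of_forall_eq_zero_or_eq_one (hXm ν) (hXval ν), measureReal_def, hX1,
      ENNReal.toReal_ofReal hϱ0]
  have hflip : ∀ ν, (1 - 2 * b ν) ^ 2 = 1 := fun ν => by
    rcases hb ν with h | h <;> norm_num [h]
  rw [hdecoded, variance_const_add_sum_mul
    (fun ν => memLp_of_forall_eq_zero_or_eq_one (hXm ν) (hXval ν)) hXindep]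
  calc ∑ ν, ((1 - 2 * b ν) * 2 ^ (ν : ℕ) * Δ) ^ 2 * variance (X ν) μ
      = ϱ * (1 - ϱ) * Δ ^ 2 * ∑ ν : Fin L, ((2 : ℝ) ^ (ν : ℕ)) ^ 2 := by
        rw [Finset.mul_sum]
        refine Finset.sum_congr rfl fun ν _ => ?_
        rw [mul_pow, mul_pow, hflip, hXvar]
        ring
    _ = _ := by
        rw [sum_fin_two_pow_sq, hΔ]
        generalize (2 : ℝ) ^ L - 1 = d
        ring

/-- Variance of the decoded output of a binary encoding-decoding scheme over a
memoryless binary symmetric channel: if the bits `b ν ∈ {0,1}` are independently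
flipped with crossover probability `ϱ`, yielding received bits
`B ν = X ν (1 - b ν) + (1 - X ν) b ν` and decoded value
`Q° = -Z + Σ_ν B ν 2^ν Δ` with `Δ = 2 Z / (2^L - 1)`, then
`Var(Q°) = ϱ (1 - ϱ) 4 Z² (2^{2L} - 1) / (3 (2^L - 1)²)`. -/
theorem decoded_output_variance
    {Ω : Type*} [MeasurableSpace Ω] (μ : Measure Ω) [IsProbabilityMeasure μ]
    (L : ℕ) (hL : 1 ≤ L) (Z : ℝ) (hZ : 0 < Z)
    (Δ : ℝ) (hΔ : Δ = 2 * Z / (2 ^ L - 1))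
    (b : Fin L → ℝ) (hb : ∀ ν, b ν = 0 ∨ b ν = 1)
    (ϱ : ℝ) (hϱ0 : 0 ≤ ϱ) (hϱ1 : ϱ ≤ 1)
    (X : Fin L → Ω → ℝ) (hXm : ∀ ν, Measurable (X ν))
    (hXval : ∀ ν ω, X ν ω = 0 ∨ X ν ω = 1)
    (hX1 : ∀ ν, μ {ω | X ν ω = 1} = ENNReal.ofReal ϱ)
    (hXindep : iIndepFun X μ)
    (B : Fin L → Ω → ℝ)
    (hB : ∀ ν ω, B ν ω = X ν ω * (1 - b ν) + (1 - X ν ω) * b ν) :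
    variance (fun ω => -Z + ∑ ν : Fin L, B ν ω * 2 ^ (ν : ℕ) * Δ) μ
      = ϱ * (1 - ϱ) * (4 * Z ^ 2 * (2 ^ (2 * L) - 1)) / (3 * (2 ^ L - 1) ^ 2) :=
  decoded_output_variance_general μ L Z Δ hΔ b hb ϱ hϱ0 X hXm hXval hX1 hXindep B hB
end

section
/- Let α₁, α₂, ς > 0 be real numbers with ς α₁ ≥ 1 and ς α₂ ≥ 1. Let ξ, h : ℕ × ℕ → ℝ satisfy, for all i ≥ 1 and j ≥ 1, the two-dimensional recursion ξ(i,j) = α₁ ξ(i,j−1) + α₂ ξ(i−1,j) + h(i,j−1) + h(i−1,j), with nonnegative boundary values ξ(i,0) ≥ 0 and ξ(0,j) ≥ 0 for all i, j, and suppose h(i,j) ≥ −(1/ς) ξ(i,j) for all i, j. Then ξ(i,j) ≥ 0 for all (i,j) ∈ ℕ × ℕ. -/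
/-- Nonnegativity of the internal dynamic variable of the dynamic event-triggered
mechanism: if `ξ` evolves by the 2-D recursion
`ξ(i,j) = α₁ ξ(i,j-1) + α₂ ξ(i-1,j) + h(i,j-1) + h(i-1,j)` with nonnegative
boundary values, `h(i,j) ≥ -(1/ς) ξ(i,j)` everywhere, and `ς α₁ ≥ 1`, `ς α₂ ≥ 1`,
then `ξ(i,j) ≥ 0` for all `(i,j)`. -/
theorem internal_dynamic_variable_nonneg
    (α₁ α₂ ς : ℝ) (hα₁ : 0 < α₁) (hα₂ : 0 < α₂) (hς : 0 < ς)
    (h1 : 1 ≤ ς * α₁) (h2 : 1 ≤ ς * α₂)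
    (ξ h : ℕ × ℕ → ℝ)
    (hrec : ∀ i j : ℕ, 1 ≤ i → 1 ≤ j →
      ξ (i, j) = α₁ * ξ (i, j - 1) + α₂ * ξ (i - 1, j) + h (i, j - 1) + h (i - 1, j))
    (hb1 : ∀ i : ℕ, 0 ≤ ξ (i, 0)) (hb2 : ∀ j : ℕ, 0 ≤ ξ (0, j))
    (hh : ∀ i j : ℕ, h (i, j) ≥ -(1 / ς) * ξ (i, j)) :
    ∀ i j : ℕ, 0 ≤ ξ (i, j) := by
  have key : ∀ n i j : ℕ, i + j ≤ n → 0 ≤ ξ (i, j) := by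
    intro n
    induction n with
    | zero =>
      intro i j hij
      have : i = 0 := by omega
      subst this
      exact hb2 j
    | succ n ih =>
      intro i j hij
      rcases Nat.eq_zero_or_pos i with hi | hi
      · subst hi; exact hb2 j
      rcases Nat.eq_zero_or_pos j with hj | hj
      · subst hj; exact hb1 i
      have hx : 0 ≤ ξ (i, j - 1) := ih i (j - 1) (by omega)
      have hy : 0 ≤ ξ (i - 1, j) := ih (i - 1) j (by omega)
      have hα₁' : 1 / ς ≤ α₁ := by
        rw [div_le_iff₀ hς]; linarith [mul_comm ς α₁]
      have hα₂' : 1 / ς ≤ α₂ := by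
        rw [div_le_iff₀ hς]; linarith [mul_comm ς α₂]
      have hha := hh i (j - 1)
      have hhb := hh (i - 1) j
      rw [hrec i j hi hj]
      nlinarith [mul_nonneg (sub_nonneg.mpr hα₁') hx,
        mul_nonneg (sub_nonneg.mpr hα₂') hy]
  intro i j; exact key (i + j) i j le_rfl
end

section
/- Let n ≥ 1 and let A₁, A₂ : ℕ × ℕ → M_n(ℝ), a₁, a₂ : ℕ × ℕ → ℝ with a₁, a₂ ≥ 0, and Q₁, Q₂ : ℕ × ℕ → M_n(ℝ) with each Q_ι(l,k) positive semidefinite. Let ǎ₁, ǎ₂ > 0. For a function M : ℕ × ℕ → M_n(ℝ) and ι ∈ {1,2}, define Φ_ι(M)(l,k) = (1 + ǎ₂) a_ι(l,k)² tr(M(l,k)) I + (1 + ǎ₂⁻¹) A_ι(l,k) M(l,k) A_ι(l,k)ᵀ. Suppose X, X̄ : ℕ × ℕ → M_n(ℝ) take positive semidefinite values and satisfy, for all l ≥ 1 and k ≥ 1: X(l,k) ⪯ (1 + ǎ₁) Φ₁(X)(l,k−1) + (1 + ǎ₁⁻¹) Φ₂(X)(l−1,k) + Q₁(l,k−1) +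 Q₂(l−1,k), and X̄(l,k) = (1 + ǎ₁) Φ₁(X̄)(l,k−1) + (1 + ǎ₁⁻¹) Φ₂(X̄)(l−1,k) + Q₁(l,k−1) + Q₂(l−1,k), with equal boundary values X̄(l,0) = X(l,0) and X̄(0,k) = X(0,k) for all l, k. Then X(l,k) ⪯ X̄(l,k) for all (l,k) ∈ ℕ × ℕ. -/
/-!
`Φ` is linear in `M` and maps positive semidefinite matrices to positive semidefinite ones
(since `tr M ≥ 0` and `A M Aᵀ ⪰ 0`), so it is monotone for the Loewner order. Hence the
right-hand side of the recursion is monotone in the values at `(l, k - 1)` and `(l - 1, k)`, and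
`X ⪯ X̄` propagates from the boundary, where both agree, to every `(l, k)` by induction.
-/

open Matrix

/-- The one-step map `Φ_ι(M)(l,k) = (1 + ca₂) a_ι(l,k)² tr(M(l,k)) I
+ (1 + ca₂⁻¹) A_ι(l,k) M(l,k) A_ι(l,k)ᵀ` appearing in the recursive bound on the
second-order moment of the state of the 2-D system. -/
noncomputable def secondMomentMap {n : ℕ} (ca₂ : ℝ)
    (A : ℕ × ℕ → Matrix (Fin n) (Fin n) ℝ) (a : ℕ × ℕ → ℝ)
    (M : ℕ × ℕ → Matrix (Fin n) (Fin n) ℝ) (p : ℕ × ℕ) :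
    Matrix (Fin n) (Fin n) ℝ :=
  ((1 + ca₂) * (a p) ^ 2 * (M p).trace) • (1 : Matrix (Fin n) (Fin n) ℝ)
    + (1 + ca₂⁻¹) • (A p * M p * (A p)ᵀ)

open scoped MatrixOrder

theorem Nat.quadrant_induction {P : ℕ → ℕ → Prop} (h_left : ∀ l, P l 0) (h_bottom : ∀ k, P 0 k)
    (h_step : ∀ l k, P (l + 1) k → P l (k + 1) → P (l + 1) (k + 1)) : ∀ l k, P l k := by
  intro l
  induction l with
  | zero => exact h_bottom
  | succ l ihl =>
    intro k
    induction k with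
    | zero => exact h_left (l + 1)
    | succ k ihk => exact h_step l k ihk (ihl (k + 1))

section SecondMomentMap

variable {n : ℕ} {ca : ℝ} (A : ℕ × ℕ → Matrix (Fin n) (Fin n) ℝ) (a : ℕ × ℕ → ℝ)

theorem secondMomentMap_sub (M N : ℕ × ℕ → Matrix (Fin n) (Fin n) ℝ) (p : ℕ × ℕ) :
    secondMomentMap ca A a (N - M) p =
      secondMomentMap ca A a N p - secondMomentMap ca A a M p := by
  simp only [secondMomentMap, Pi.sub_apply, trace_sub, Matrix.sub_mul, mul_sub,
    sub_smul, smul_sub]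
  abel

theorem posSemidef_secondMomentMap (hca : 0 ≤ ca) {M : ℕ × ℕ → Matrix (Fin n) (Fin n) ℝ}
    {p : ℕ × ℕ} (hM : (M p).PosSemidef) : (secondMomentMap ca A a M p).PosSemidef := by
  have hAMA : (A p * M p * (A p)ᵀ).PosSemidef := by
    simpa only [conjTranspose_eq_transpose_of_trivial] using hM.mul_mul_conjTranspose_same (A p)
  refine (PosSemidef.one.smul ?_).add (hAMA.smul (by positivity))
  exact mul_nonneg (by positivity) hM.trace_nonneg

theorem secondMomentMap_mono (hca : 0 ≤ ca) {M N : ℕ × ℕ → Matrix (Fin n) (Fin n) ℝ}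
    {p : ℕ × ℕ} (h : M p ≤ N p) : secondMomentMap ca A a M p ≤ secondMomentMap ca A a N p := by
  rw [le_iff, ← secondMomentMap_sub]
  exact posSemidef_secondMomentMap A a hca h

end SecondMomentMap

theorem second_moment_comparison_general
    {n : ℕ}
    (A₁ A₂ : ℕ × ℕ → Matrix (Fin n) (Fin n) ℝ)
    (a₁ a₂ : ℕ × ℕ → ℝ)
    (Q₁ Q₂ : ℕ × ℕ → Matrix (Fin n) (Fin n) ℝ)
    (ca₁ ca₂ : ℝ) (hca₁ : 0 < ca₁) (hca₂ : 0 < ca₂)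
    (X Xb : ℕ × ℕ → Matrix (Fin n) (Fin n) ℝ)
    (hXrec : ∀ l k : ℕ, 1 ≤ l → 1 ≤ k →
      ((1 + ca₁) • secondMomentMap ca₂ A₁ a₁ X (l, k - 1)
        + (1 + ca₁⁻¹) • secondMomentMap ca₂ A₂ a₂ X (l - 1, k)
        + Q₁ (l, k - 1) + Q₂ (l - 1, k) - X (l, k)).PosSemidef)
    (hXbrec : ∀ l k : ℕ, 1 ≤ l → 1 ≤ k →
      Xb (l, k) = (1 + ca₁) • secondMomentMap ca₂ A₁ a₁ Xb (l, k - 1)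
        + (1 + ca₁⁻¹) • secondMomentMap ca₂ A₂ a₂ Xb (l - 1, k)
        + Q₁ (l, k - 1) + Q₂ (l - 1, k))
    (hb1 : ∀ l : ℕ, Xb (l, 0) = X (l, 0)) (hb2 : ∀ k : ℕ, Xb (0, k) = X (0, k)) :
    ∀ l k : ℕ, (Xb (l, k) - X (l, k)).PosSemidef := by
  suffices h : ∀ l k, X (l, k) ≤ Xb (l, k) from fun l k => le_iff.mp (h l k)
  refine Nat.quadrant_induction (fun l => (hb1 l).ge) (fun k => (hb2 k).ge) fun l k h₁ h₂ => ?_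
  calc X (l + 1, k + 1)
      ≤ (1 + ca₁) • secondMomentMap ca₂ A₁ a₁ X (l + 1, k)
        + (1 + ca₁⁻¹) • secondMomentMap ca₂ A₂ a₂ X (l, k + 1)
        + Q₁ (l + 1, k) + Q₂ (l, k + 1) :=
        hXrec (l + 1) (k + 1) l.succ_pos k.succ_pos
    _ ≤ (1 + ca₁) • secondMomentMap ca₂ A₁ a₁ Xb (l + 1, k)
        + (1 + ca₁⁻¹) • secondMomentMap ca₂ A₂ a₂ Xb (l, k + 1)
        + Q₁ (l + 1, k) + Q₂ (l, k + 1) := by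
      gcongr ?_ + ?_ + _ + _
      · exact smul_le_smul_of_nonneg_left (secondMomentMap_mono A₁ a₁ hca₂.le h₁) (by positivity)
      · exact smul_le_smul_of_nonneg_left (secondMomentMap_mono A₂ a₂ hca₂.le h₂) (by positivity)
    _ = Xb (l + 1, k + 1) := (hXbrec (l + 1) (k + 1) l.succ_pos k.succ_pos).symm

/-- Comparison principle for the recursive Loewner bound on the second-order moment
of the state of the 2-D system: if `X` satisfies the recursive Loewner inequality
and `X̄` satisfies the corresponding recursive equality with the same boundary data,
then `X(l,k) ⪯ X̄(l,k)` for all `(l,k)`. -/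
theorem second_moment_comparison
    {n : ℕ} (hn : 1 ≤ n)
    (A₁ A₂ : ℕ × ℕ → Matrix (Fin n) (Fin n) ℝ)
    (a₁ a₂ : ℕ × ℕ → ℝ) (ha₁ : ∀ p, 0 ≤ a₁ p) (ha₂ : ∀ p, 0 ≤ a₂ p)
    (Q₁ Q₂ : ℕ × ℕ → Matrix (Fin n) (Fin n) ℝ)
    (hQ₁ : ∀ p, (Q₁ p).PosSemidef) (hQ₂ : ∀ p, (Q₂ p).PosSemidef)
    (ca₁ ca₂ : ℝ) (hca₁ : 0 < ca₁) (hca₂ : 0 < ca₂)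
    (X Xb : ℕ × ℕ → Matrix (Fin n) (Fin n) ℝ)
    (hX : ∀ p, (X p).PosSemidef) (hXb : ∀ p, (Xb p).PosSemidef)
    (hXrec : ∀ l k : ℕ, 1 ≤ l → 1 ≤ k →
      ((1 + ca₁) • secondMomentMap ca₂ A₁ a₁ X (l, k - 1)
        + (1 + ca₁⁻¹) • secondMomentMap ca₂ A₂ a₂ X (l - 1, k)
        + Q₁ (l, k - 1) + Q₂ (l - 1, k) - X (l, k)).PosSemidef)
    (hXbrec : ∀ l k : ℕ, 1 ≤ l → 1 ≤ k →
      Xb (l, k) = (1 + ca₁) • secondMomentMap ca₂ A₁ a₁ Xb (l, k - 1)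
        + (1 + ca₁⁻¹) • secondMomentMap ca₂ A₂ a₂ Xb (l - 1, k)
        + Q₁ (l, k - 1) + Q₂ (l - 1, k))
    (hb1 : ∀ l : ℕ, Xb (l, 0) = X (l, 0)) (hb2 : ∀ k : ℕ, Xb (0, k) = X (0, k)) :
    ∀ l k : ℕ, (Xb (l, k) - X (l, k)).PosSemidef :=
  second_moment_comparison_general A₁ A₂ a₁ a₂ Q₁ Q₂ ca₁ ca₂ hca₁ hca₂ X Xb hXrec hXbrec hb1 hb2
end

section
/- Let c > 0 be a real number, let C be a real m × n matrix, let H₁,…,H_r be real n × m matrices, and let β₁,…,β_r ≥ 0 be real numbers. For a real symmetric positive semidefinite n × n matrix Ξ and a real symmetric positive semidefinite m × m matrix Θ such that F(Ξ,Θ) := Θ + (1 + c) C Ξ Cᵀ is positive definite, define V(Ξ,Θ) = (1 + c) Ξ − (1 + c)² Ξ Cᵀ F(Ξ,Θ)⁻¹ C Ξ + Σ_{ν=1}^{r} β_ν H_ν F(Ξ,Θ) H_νᵀ. If Ξ¹ ⪯ Ξ² and Θ¹ ⪯ Θ² (with F(Ξ¹,Θ¹) and F(Ξ²,Θ²) positive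 definite), then V(Ξ¹,Θ¹) ⪯ V(Ξ²,Θ²) in the Loewner order. -/
open Matrix

/-- The innovation-covariance matrix `F(Ξ, Θ) = Θ + (1 + c) C Ξ Cᵀ`. -/
noncomputable def innovMat {n m : ℕ} (c : ℝ) (C : Matrix (Fin m) (Fin n) ℝ)
    (Ξ : Matrix (Fin n) (Fin n) ℝ) (Θ : Matrix (Fin m) (Fin m) ℝ) :
    Matrix (Fin m) (Fin m) ℝ :=
  Θ + (1 + c) • (C * Ξ * Cᵀ)

/-- The minimized one-step update of the filtering-error covariance bound
`V(Ξ, Θ) = (1 + c) Ξ - (1 + c)² Ξ Cᵀ F(Ξ,Θ)⁻¹ C Ξ + Σ_ν β_ν H_ν F(Ξ,Θ) H_νᵀ`. -/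
noncomputable def updateBound {n m r : ℕ} (c : ℝ) (C : Matrix (Fin m) (Fin n) ℝ)
    (H : Fin r → Matrix (Fin n) (Fin m) ℝ) (β : Fin r → ℝ)
    (Ξ : Matrix (Fin n) (Fin n) ℝ) (Θ : Matrix (Fin m) (Fin m) ℝ) :
    Matrix (Fin n) (Fin n) ℝ :=
  (1 + c) • Ξ - ((1 + c) ^ 2) • (Ξ * Cᵀ * (innovMat c C Ξ Θ)⁻¹ * C * Ξ)
    + ∑ ν : Fin r, β ν • (H ν * innovMat c C Ξ Θ * (H ν)ᵀ)

/-
Write `F = Θ + a C Ξ Cᵀ` and `J(K) = a (I - K C) Ξ (I - K C)ᵀ + K Θ Kᵀ`. Completing the square gives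
`J(K) = R(Ξ, Θ) + (K - K*) F (K - K*)ᵀ` with `K* = a Ξ Cᵀ F⁻¹` and
`R(Ξ, Θ) = a Ξ - a² Ξ Cᵀ F⁻¹ C Ξ`, so `R` is the minimum of `J` over all gains. For a fixed gain,
`J` is monotone in `(Ξ, Θ)`; hence `R(Ξ₁, Θ₁) ≤ J₁(K₂*) ≤ J₂(K₂*) = R(Ξ₂, Θ₂)`. The remaining part
of `V` is monotone because `F` is.
-/

open scoped MatrixOrder

section

variable {m n : Type*} [Fintype m] [Fintype n]

theorem Matrix.PosSemidef.mul_mul_transpose_same {A : Matrix n n ℝ} (hA : A.PosSemidef)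
    (X : Matrix m n ℝ) : (X * A * Xᵀ).PosSemidef := by
  rw [← conjTranspose_eq_transpose_of_trivial]
  exact hA.mul_mul_conjTranspose_same X

theorem Matrix.mul_mul_transpose_le_mul_mul_transpose {A B : Matrix n n ℝ} (h : A ≤ B)
    (X : Matrix m n ℝ) : X * A * Xᵀ ≤ X * B * Xᵀ := by
  rw [le_iff, ← Matrix.sub_mul, ← Matrix.mul_sub]
  exact PosSemidef.mul_mul_transpose_same h X

variable [DecidableEq n] (a : ℝ) (C : Matrix m n ℝ)

/-- The paper's `J(K)`, with `a = 1 + c`. -/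
def gainCost (Ξ : Matrix n n ℝ) (Θ : Matrix m m ℝ) (K : Matrix n m ℝ) : Matrix n n ℝ :=
  a • ((1 - K * C) * Ξ * (1 - K * C)ᵀ) + K * Θ * Kᵀ

variable {a C}

theorem gainCost_mono (ha : 0 ≤ a) {Ξ₁ Ξ₂ : Matrix n n ℝ} {Θ₁ Θ₂ : Matrix m m ℝ}
    (hΞ : Ξ₁ ≤ Ξ₂) (hΘ : Θ₁ ≤ Θ₂) (K : Matrix n m ℝ) :
    gainCost a C Ξ₁ Θ₁ K ≤ gainCost a C Ξ₂ Θ₂ K :=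
  add_le_add (smul_le_smul_of_nonneg_left (mul_mul_transpose_le_mul_mul_transpose hΞ _) ha)
    (mul_mul_transpose_le_mul_mul_transpose hΘ K)

variable (a C) [DecidableEq m]

noncomputable def riccatiUpdate (Ξ : Matrix n n ℝ) (Θ : Matrix m m ℝ) : Matrix n n ℝ :=
  a • Ξ - a ^ 2 • (Ξ * Cᵀ * (Θ + a • (C * Ξ * Cᵀ))⁻¹ * C * Ξ)

variable {a C}

theorem gainCost_eq_riccatiUpdate_add {Ξ : Matrix n n ℝ} {Θ : Matrix m m ℝ}
    (hΞ : Ξ.IsSymm) (hF : (Θ + a • (C * Ξ * Cᵀ)).IsSymm) [Invertible (Θ + a • (C * Ξ * Cᵀ))]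
    (K : Matrix n m ℝ) :
    gainCost a C Ξ Θ K = riccatiUpdate a C Ξ Θ +
      (K - a • (Ξ * Cᵀ * (Θ + a • (C * Ξ * Cᵀ))⁻¹)) * (Θ + a • (C * Ξ * Cᵀ)) *
        (K - a • (Ξ * Cᵀ * (Θ + a • (C * Ξ * Cᵀ))⁻¹))ᵀ := by
  set F := Θ + a • (C * Ξ * Cᵀ) with hFdef
  have hΘ : Θ = F - a • (C * Ξ * Cᵀ) := by rw [hFdef, add_sub_cancel_right]
  rw [gainCost, riccatiUpdate, ← hFdef, hΘ]
  simp only [transpose_sub, transpose_smul, transpose_mul, transpose_transpose, transpose_one,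
    hΞ.eq, hF.inv.eq, Matrix.sub_mul, Matrix.mul_sub, Matrix.smul_mul, Matrix.mul_smul,
    smul_smul, smul_sub, Matrix.mul_assoc, Matrix.one_mul, Matrix.mul_one,
    mul_inv_cancel_left_of_invertible, inv_mul_cancel_left_of_invertible]
  module

theorem riccatiUpdate_le_gainCost {Ξ : Matrix n n ℝ} {Θ : Matrix m m ℝ} (hΞ : Ξ.IsSymm)
    (hF : (Θ + a • (C * Ξ * Cᵀ)).PosDef) (K : Matrix n m ℝ) :
    riccatiUpdate a C Ξ Θ ≤ gainCost a C Ξ Θ K := by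
  have := hF.isUnit.invertible
  rw [gainCost_eq_riccatiUpdate_add hΞ (isHermitian_iff_isSymm.mp hF.isHermitian)]
  exact le_add_of_nonneg_right (hF.posSemidef.mul_mul_transpose_same _).nonneg

theorem gainCost_optimalGain {Ξ : Matrix n n ℝ} {Θ : Matrix m m ℝ} (hΞ : Ξ.IsSymm)
    (hF : (Θ + a • (C * Ξ * Cᵀ)).PosDef) :
    gainCost a C Ξ Θ (a • (Ξ * Cᵀ * (Θ + a • (C * Ξ * Cᵀ))⁻¹)) = riccatiUpdate a C Ξ Θ := by
  have := hF.isUnit.invertible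
  rw [gainCost_eq_riccatiUpdate_add hΞ (isHermitian_iff_isSymm.mp hF.isHermitian), sub_self,
    Matrix.zero_mul, Matrix.zero_mul, add_zero]

theorem riccatiUpdate_mono (ha : 0 ≤ a) {Ξ₁ Ξ₂ : Matrix n n ℝ} {Θ₁ Θ₂ : Matrix m m ℝ}
    (hΞ₁ : Ξ₁.IsSymm) (hΞ₂ : Ξ₂.IsSymm) (hF₁ : (Θ₁ + a • (C * Ξ₁ * Cᵀ)).PosDef)
    (hF₂ : (Θ₂ + a • (C * Ξ₂ * Cᵀ)).PosDef) (hΞ : Ξ₁ ≤ Ξ₂) (hΘ : Θ₁ ≤ Θ₂) :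
    riccatiUpdate a C Ξ₁ Θ₁ ≤ riccatiUpdate a C Ξ₂ Θ₂ :=
  calc riccatiUpdate a C Ξ₁ Θ₁
      ≤ gainCost a C Ξ₁ Θ₁ (a • (Ξ₂ * Cᵀ * (Θ₂ + a • (C * Ξ₂ * Cᵀ))⁻¹)) :=
        riccatiUpdate_le_gainCost hΞ₁ hF₁ _
    _ ≤ gainCost a C Ξ₂ Θ₂ (a • (Ξ₂ * Cᵀ * (Θ₂ + a • (C * Ξ₂ * Cᵀ))⁻¹)) :=
        gainCost_mono ha hΞ hΘ _
    _ = riccatiUpdate a C Ξ₂ Θ₂ := gainCost_optimalGain hΞ₂ hF₂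

end

theorem innovMat_mono {n m : ℕ} {c : ℝ} (hc : 0 ≤ 1 + c) (C : Matrix (Fin m) (Fin n) ℝ)
    {Ξ₁ Ξ₂ : Matrix (Fin n) (Fin n) ℝ} {Θ₁ Θ₂ : Matrix (Fin m) (Fin m) ℝ}
    (hΞ : Ξ₁ ≤ Ξ₂) (hΘ : Θ₁ ≤ Θ₂) : innovMat c C Ξ₁ Θ₁ ≤ innovMat c C Ξ₂ Θ₂ :=
  add_le_add hΘ (smul_le_smul_of_nonneg_left (mul_mul_transpose_le_mul_mul_transpose hΞ C) hc)

theorem updateBound_monotone_general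
    {n m r : ℕ} (c : ℝ) (hc : 0 < c)
    (C : Matrix (Fin m) (Fin n) ℝ)
    (H : Fin r → Matrix (Fin n) (Fin m) ℝ)
    (β : Fin r → ℝ) (hβ : ∀ ν, 0 ≤ β ν)
    (Ξ₁ Ξ₂ : Matrix (Fin n) (Fin n) ℝ) (hΞ₁ : Ξ₁.PosSemidef) (hΞ₂ : Ξ₂.PosSemidef)
    (Θ₁ Θ₂ : Matrix (Fin m) (Fin m) ℝ)
    (hF₁ : (innovMat c C Ξ₁ Θ₁).PosDef) (hF₂ : (innovMat c C Ξ₂ Θ₂).PosDef)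
    (hΞ : (Ξ₂ - Ξ₁).PosSemidef) (hΘ : (Θ₂ - Θ₁).PosSemidef) :
    (updateBound c C H β Ξ₂ Θ₂ - updateBound c C H β Ξ₁ Θ₁).PosSemidef := by
  have ha : 0 ≤ 1 + c := by linarith
  have hF : innovMat c C Ξ₁ Θ₁ ≤ innovMat c C Ξ₂ Θ₂ := innovMat_mono ha C hΞ hΘ
  change riccatiUpdate (1 + c) C Ξ₁ Θ₁ + _ ≤ riccatiUpdate (1 + c) C Ξ₂ Θ₂ + _
  exact add_le_add
    (riccatiUpdate_mono ha (isHermitian_iff_isSymm.mp hΞ₁.isHermitian)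
      (isHermitian_iff_isSymm.mp hΞ₂.isHermitian) hF₁ hF₂ hΞ hΘ)
    (Finset.sum_le_sum fun ν _ =>
      smul_le_smul_of_nonneg_left (mul_mul_transpose_le_mul_mul_transpose hF (H ν)) (hβ ν))

/-- Monotonicity of the minimized filtering-error covariance update in the Loewner
order: if `Ξ¹ ⪯ Ξ²` and `Θ¹ ⪯ Θ²` (all positive semidefinite, with both innovation
matrices positive definite), then `V(Ξ¹, Θ¹) ⪯ V(Ξ², Θ²)`. -/
theorem updateBound_monotone
    {n m r : ℕ} (c : ℝ) (hc : 0 < c)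
    (C : Matrix (Fin m) (Fin n) ℝ)
    (H : Fin r → Matrix (Fin n) (Fin m) ℝ)
    (β : Fin r → ℝ) (hβ : ∀ ν, 0 ≤ β ν)
    (Ξ₁ Ξ₂ : Matrix (Fin n) (Fin n) ℝ) (hΞ₁ : Ξ₁.PosSemidef) (hΞ₂ : Ξ₂.PosSemidef)
    (Θ₁ Θ₂ : Matrix (Fin m) (Fin m) ℝ) (hΘ₁ : Θ₁.PosSemidef) (hΘ₂ : Θ₂.PosSemidef)
    (hF₁ : (innovMat c C Ξ₁ Θ₁).PosDef) (hF₂ : (innovMat c C Ξ₂ Θ₂).PosDef)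
    (hΞ : (Ξ₂ - Ξ₁).PosSemidef) (hΘ : (Θ₂ - Θ₁).PosSemidef) :
    (updateBound c C H β Ξ₂ Θ₂ - updateBound c C H β Ξ₁ Θ₁).PosSemidef :=
  updateBound_monotone_general c hc C H β hβ Ξ₁ Ξ₂ hΞ₁ hΞ₂ Θ₁ Θ₂ hF₁ hF₂ hΞ hΘ
end
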